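/- Unbiasedness of the D-dimensional random Fourier feature map for the RBF kernel. Let d, D ≥ 1 and σ > 0. Let (ω_1, b_1), …, (ω_D, b_D) be independent random pairs, where each ω_i has independent N(0, 1/σ²) coordinates in ℝ^d and each b_i is uniform on [0, 2π], independent of ω_i. Define z(x) = √(2/D) (cos(ω_1ᵀx + b_1), …, cos(ω_Dᵀx + b_D)) ∈ ℝ^D. Then for all x, x' ∈ ℝ^d, E[ z(x)ᵀ z(x') ] = exp(−‖x − x'‖² / (2σ²)) = K_RBF(x, x'). -/

import Mathlib

open MeasureTheory Matrix Real ProbabilityTheory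

/-- The uniform probability measure on `[0, 2π]`. -/
noncomputable def unifPhase : Measure ℝ :=
  (ENNReal.ofReal (2 * π))⁻¹ • volume.restrict (Set.Icc 0 (2 * π))

instance : IsProbabilityMeasure unifPhase := by
  constructor
  rw [unifPhase, Measure.smul_apply, Measure.restrict_apply_univ, Real.volume_Icc,
    smul_eq_mul]
  rw [show (2 * π - 0 : ℝ) = 2 * π by ring, ENNReal.inv_mul_cancel]
  · exact (ENNReal.ofReal_pos.mpr (by positivity)).ne'
  · exact ENNReal.ofReal_ne_top

/-- The RBF kernel with lengthscale `σ` on `ℝ^d`. -/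
noncomputable def KRBF {d : ℕ} (σ : ℝ) (x x' : Fin d → ℝ) : ℝ :=
  Real.exp (-(∑ i, (x i - x' i) ^ 2) / (2 * σ ^ 2))

/-- The `D`-dimensional random Fourier feature map evaluated at `x`, given
frequencies/phases `w i = (ω_i, b_i)`:
`z(x) = √(2/D) (cos(ω_iᵀx + b_i))_{i=1}^D`. -/
noncomputable def rff (d D : ℕ) (w : Fin D → (Fin d → ℝ) × ℝ)
    (x : Fin d → ℝ) : Fin D → ℝ :=
  fun i => Real.sqrt (2 / D) * Real.cos ((w i).1 ⬝ᵥ x + (w i).2)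

/-! Writing `z(x)ᵀz(x')` as a sum of `D` i.i.d. terms, it suffices to compute one of them.
By `2 cos(a + b) cos(a' + b) = cos(a - a') + cos(a + a' + 2b)`, the uniform phase kills the
second summand, which has a full number of periods on `[0, 2π]`, and leaves
`E[cos(ωᵀ(x - x'))]`: the real part of the characteristic function of the Gaussian `ω`
at `x - x'`, which factorises over the independent coordinates. -/

lemma integral_cos_add_int_mul_unifPhase (c : ℝ) {n : ℤ} (hn : n ≠ 0) :
    ∫ b, cos (c + n * b) ∂unifPhase = 0 := by
  have hperiod : ∫ b in (0)..(2 * π), cos (n * b + c) = 0 := by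
    rw [intervalIntegral.integral_comp_mul_add cos (by exact_mod_cast hn), integral_cos,
      mul_zero, zero_add, add_comm, sin_add_int_mul_two_pi, sub_self, smul_zero]
  rw [unifPhase, integral_smul_measure, integral_Icc_eq_integral_Ioc,
    ← intervalIntegral.integral_of_le (by positivity)]
  simp_rw [add_comm c]
  rw [hperiod, smul_zero]

lemma integral_cos_dotProduct_pi_gaussianReal {ι : Type*} [Fintype ι] (v : NNReal)
    (y : ι → ℝ) :
    ∫ ω, cos (ω ⬝ᵥ y) ∂Measure.pi (fun _ : ι => gaussianReal 0 v)
      = exp (-(v * ∑ j, y j ^ 2) / 2) := by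
  have hprod (ω : ι → ℝ) : Complex.exp ((ω ⬝ᵥ y : ℝ) * Complex.I)
      = ∏ j, Complex.exp (y j * ω j * Complex.I) := by
    simp_rw [dotProduct, Complex.ofReal_sum, Finset.sum_mul, Complex.exp_sum,
      Complex.ofReal_mul, mul_comm (ω _ : ℂ)]
  have hchar : ∫ ω, Complex.exp ((ω ⬝ᵥ y : ℝ) * Complex.I)
      ∂Measure.pi (fun _ : ι => gaussianReal 0 v)
      = (exp (-(v * ∑ j, y j ^ 2) / 2) : ℝ) := by
    simp_rw [hprod]
    rw [integral_fintype_prod_eq_prod (fun j (t : ℝ) => Complex.exp (y j * t * Complex.I))]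
    simp_rw [← charFun_apply_real, charFun_gaussianReal, ← Complex.exp_sum]
    push_cast
    congr 1
    simp only [mul_zero, zero_mul, zero_sub, Finset.sum_neg_distrib, Finset.mul_sum, neg_div,
      Finset.sum_div]
  have hintegrable : Integrable (fun ω : ι → ℝ => Complex.exp ((ω ⬝ᵥ y : ℝ) * Complex.I))
      (Measure.pi (fun _ : ι => gaussianReal 0 v)) :=
    Integrable.of_bound (by fun_prop) 1 (.of_forall fun ω => by
      rw [Complex.norm_exp_ofReal_mul_I])
  simp_rw [← Complex.exp_ofReal_mul_I_re]
  exact (integral_re hintegrable).trans (by rw [hchar]; rfl)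

lemma integrable_cos_comp {α : Type*} [MeasurableSpace α] {μ : Measure α} [IsFiniteMeasure μ]
    {f : α → ℝ} (hf : Measurable f) : Integrable (fun a => cos (f a)) μ :=
  .of_bound (by fun_prop) 1 (.of_forall fun a => by simpa using abs_cos_le_one (f a))

lemma integrable_cos_mul_cos {ι : Type*} [Fintype ι] (μ : Measure ((ι → ℝ) × ℝ))
    [IsFiniteMeasure μ] (x x' : ι → ℝ) :
    Integrable (fun p => cos (p.1 ⬝ᵥ x + p.2) * cos (p.1 ⬝ᵥ x' + p.2)) μ :=
  (integrable_cos_comp (by fun_prop)).bdd_mul (c := 1) (by fun_prop)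
    (.of_forall fun _ => by simpa using abs_cos_le_one _)

lemma two_mul_integral_cos_mul_cos_prod_unifPhase {ι : Type*} [Fintype ι]
    (ν : Measure (ι → ℝ)) [IsProbabilityMeasure ν] (x x' : ι → ℝ) :
    2 * ∫ p, cos (p.1 ⬝ᵥ x + p.2) * cos (p.1 ⬝ᵥ x' + p.2) ∂ν.prod unifPhase
      = ∫ ω, cos (ω ⬝ᵥ (x - x')) ∂ν := by
  have hsplit (p : (ι → ℝ) × ℝ) : 2 * cos (p.1 ⬝ᵥ x + p.2) * cos (p.1 ⬝ᵥ x' + p.2)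
      = cos (p.1 ⬝ᵥ (x - x')) + cos (p.1 ⬝ᵥ (x + x') + (2 : ℤ) * p.2) := by
    rw [two_mul_cos_mul_cos, dotProduct_sub, dotProduct_add]
    congr 2 <;> push_cast <;> ring
  have hphase : ∫ p, cos (p.1 ⬝ᵥ (x + x') + (2 : ℤ) * p.2) ∂ν.prod unifPhase = 0 := by
    rw [integral_prod _ (integrable_cos_comp (by fun_prop))]
    simp_rw [integral_cos_add_int_mul_unifPhase _ two_ne_zero, integral_zero]
  rw [← integral_const_mul]
  simp_rw [← mul_assoc, hsplit]
  rw [integral_add (integrable_cos_comp (by fun_prop)) (integrable_cos_comp (by fun_prop)),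
    hphase, add_zero, integral_fun_fst (fun ω => cos (ω ⬝ᵥ (x - x'))), probReal_univ,
    one_smul]

lemma integral_sum_comp_eval_pi {ι α E : Type*} [Fintype ι] [MeasurableSpace α]
    [NormedAddCommGroup E] [NormedSpace ℝ E] (μ : Measure α) [IsProbabilityMeasure μ]
    {g : α → E} (hg : Integrable g μ) :
    ∫ w : ι → α, ∑ i, g (w i) ∂Measure.pi (fun _ => μ) = Fintype.card ι • ∫ a, g a ∂μ := by
  have hcoord (i : ι) : ∫ w : ι → α, g (w i) ∂Measure.pi (fun _ => μ) = ∫ a, g a ∂μ :=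
    integral_comp_eval (μ := fun _ => μ) hg.aestronglyMeasurable
  rw [integral_finsetSum _ fun i _ => integrable_comp_eval hg]
  simp_rw [hcoord, Finset.sum_const, Finset.card_univ]

lemma rff_dotProduct_rff (d D : ℕ) (w : Fin D → (Fin d → ℝ) × ℝ) (x x' : Fin d → ℝ) :
    rff d D w x ⬝ᵥ rff d D w x'
      = ∑ i, 2 / D * (cos ((w i).1 ⬝ᵥ x + (w i).2) * cos ((w i).1 ⬝ᵥ x' + (w i).2)) := by
  refine Finset.sum_congr rfl fun i _ => ?_
  rw [rff, rff, mul_mul_mul_comm, mul_self_sqrt (by positivity)]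

/-- Unbiasedness of the `D`-dimensional random Fourier feature map for the RBF
kernel: with i.i.d. pairs `(ω_i, b_i)` where `ω_i ~ N(0, σ⁻² I_d)` and
`b_i ~ Uniform[0, 2π]`, `E[z(x)ᵀ z(x')] = K_RBF(x, x')`. -/
theorem stmt12 (d D : ℕ) (hD : 1 ≤ D) (σ : ℝ)
    (x x' : Fin d → ℝ) :
    ∫ w : Fin D → (Fin d → ℝ) × ℝ,
        rff d D w x ⬝ᵥ rff d D w x'
        ∂(Measure.pi fun _ : Fin D =>
            (Measure.pi fun _ : Fin d =>
              gaussianReal 0 (⟨(σ ^ 2)⁻¹, by positivity⟩ : NNReal)).prod unifPhase)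
      = KRBF σ x x' := by
  -- Naming the variance gives it the type `NNReal` rather than `{r // 0 ≤ r}`, which the
  -- instance search needs.
  set v : NNReal := ⟨(σ ^ 2)⁻¹, by positivity⟩
  have hv : (v : ℝ) = (σ ^ 2)⁻¹ := rfl
  have hD0 : (D : ℝ) ≠ 0 := Nat.cast_ne_zero.mpr (by omega)
  simp_rw [rff_dotProduct_rff]
  rw [integral_sum_comp_eval_pi _ ((integrable_cos_mul_cos _ x x').const_mul _),
    integral_const_mul, Fintype.card_fin, nsmul_eq_mul, div_mul_eq_mul_div,
    two_mul_integral_cos_mul_cos_prod_unifPhase,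
    integral_cos_dotProduct_pi_gaussianReal, mul_div_cancel₀ _ hD0, KRBF]
  congr 1
  simp only [Pi.sub_apply, hv]
  ring
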